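/- The sets S∞ := {(a0,a+,a−) ∈ ℝ³ : a+a− > a0 > 1, a0a− > a+ > 1, a0a+ > a− > 1} and S0 := {(a0,a+,a−) ∈ ℝ³ : 0 < a+a− < a0 < 1, 0 < a0a− < a+ < 1, 0 < a0a+ < a− < 1} are forward-invariant for the ODE system (instB2): any C¹ solution on [t1, t2] ⊂ (0,∞) whose value at t1 lies in S∞ (respectively S0) remains in S∞ (respectively S0) for all t ∈ [t1, t2]. -/
import Mathlib


open Set

set_option maxHeartbeats 1000000

/-- Gronwall-type positivity invariance for a finite family of quantities. -/
lemma key_pos_invariant {n : ℕ} (q d : Fin n → ℝ → ℝ) (t1 t2 K : ℝ)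
    (ht : t1 ≤ t2) (hK : 0 ≤ K)
    (hd : ∀ i, ∀ t ∈ Icc t1 t2, HasDerivAt (q i) (d i t) t)
    (hb : ∀ t ∈ Icc t1 t2, (∀ j, 0 ≤ q j t) → ∀ i, -(K * q i t) ≤ d i t)
    (h0 : ∀ i, 0 < q i t1) :
    ∀ t ∈ Icc t1 t2, ∀ i, 0 < q i t := by
  set φ : Fin n → ℝ → ℝ := fun i s => q i t1 * Real.exp (K * t1) * Real.exp (-(K * s)) with hφ
  have hφpos : ∀ i s, 0 < φ i s := fun i s =>
    mul_pos (mul_pos (h0 i) (Real.exp_pos _)) (Real.exp_pos _)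
  have hφt1 : ∀ i, φ i t1 = q i t1 := by
    intro i
    simp only [hφ]
    rw [mul_assoc, ← Real.exp_add]
    simp
  set S : Set ℝ := {t | t ∈ Icc t1 t2 ∧ ∀ s ∈ Icc t1 t, ∀ i, φ i s ≤ q i s} with hS
  have ht1S : t1 ∈ S := by
    refine ⟨⟨le_refl _, ht⟩, ?_⟩
    intro s hs i
    have : s = t1 := le_antisymm hs.2 hs.1
    rw [this, hφt1]
  have hbdd : BddAbove S := ⟨t2, fun x hx => hx.1.2⟩
  have hne : S.Nonempty := ⟨t1, ht1S⟩
  set T := sSup S with hT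
  have hT1 : t1 ≤ T := le_csSup hbdd ht1S
  have hT2 : T ≤ t2 := csSup_le hne fun x hx => hx.1.2
  -- T ∈ S
  have hTS : T ∈ S := by
    refine ⟨⟨hT1, hT2⟩, ?_⟩
    intro s hs i
    rcases lt_or_eq_of_le hs.2 with hlt | heq
    · obtain ⟨t, htS, hst⟩ := exists_lt_of_lt_csSup hne hlt
      exact htS.2 s ⟨hs.1, hst.le⟩ i
    · -- s = T; limit argument
      subst heq
      rcases eq_or_lt_of_le hT1 with h1 | h1
      · rw [← h1, hφt1]
      · have hcont : ContinuousAt (fun s => q i s - φ i s) T :=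
          ((hd i T ⟨hT1, hT2⟩).continuousAt).sub (by fun_prop)
        have hnb : (nhdsWithin T (Ico t1 T)).NeBot := by
          rw [← mem_closure_iff_nhdsWithin_neBot, closure_Ico (ne_of_lt h1)]
          exact ⟨hT1, le_refl _⟩
        have htd : Filter.Tendsto (fun s' => q i s' - φ i s') (nhdsWithin T (Ico t1 T))
            (nhds (q i T - φ i T)) := hcont.tendsto.mono_left nhdsWithin_le_nhds
        have hev : ∀ᶠ s' in nhdsWithin T (Ico t1 T), 0 ≤ q i s' - φ i s' := by
          filter_upwards [self_mem_nhdsWithin] with s' hs'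
          have hlt' : s' < T := hs'.2
          obtain ⟨t, htS, hst⟩ := exists_lt_of_lt_csSup hne hlt'
          exact sub_nonneg.2 (htS.2 s' ⟨hs'.1, hst.le⟩ i)
        linarith [ge_of_tendsto htd hev]
  -- show T = t2 by contradiction
  have hTt2 : T = t2 := by
    by_contra hne'
    have hTlt : T < t2 := lt_of_le_of_ne hT2 hne'
    have hqTpos : ∀ i, 0 < q i T := fun i => lt_of_lt_of_le (hφpos i T) (hTS.2 T ⟨hT1, le_refl _⟩ i)
    have hev : ∀ᶠ s in nhds T, ∀ i, 0 < q i s := by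
      rw [Filter.eventually_all]
      intro i
      exact continuousAt_const.eventually_lt ((hd i T ⟨hT1, hT2⟩).continuousAt) (hqTpos i)
    obtain ⟨δ, hδ, hball⟩ := Metric.eventually_nhds_iff.1 hev
    set t3 := min (T + δ / 2) t2 with ht3
    have hTt3 : T < t3 := lt_min (by linarith) hTlt
    have ht3le : t3 ≤ t2 := min_le_right _ _
    -- all q nonneg on [t1, t3]
    have hqnn : ∀ s ∈ Icc t1 t3, ∀ j, 0 ≤ q j s := by
      intro s hs j
      rcases le_or_gt s T with h | h
      · exact le_trans (hφpos j s).le (hTS.2 s ⟨hs.1, h⟩ j)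
      · have : dist s T < δ := by
          rw [Real.dist_eq, abs_of_pos (sub_pos.2 h)]
          have := hs.2
          have := min_le_left (T + δ / 2) t2
          have : s ≤ T + δ / 2 := le_trans hs.2 (min_le_left _ _)
          linarith
        exact (hball this j).le
    -- monotonicity of g i s = q i s * exp (K s)
    have hmono : ∀ i, MonotoneOn (fun s => q i s * Real.exp (K * s)) (Icc t1 t3) := by
      intro i
      have hderiv : ∀ x ∈ Icc t1 t3, HasDerivAt (fun s => q i s * Real.exp (K * s))
          (d i x * Real.exp (K * x) + q i x * (Real.exp (K * x) * K)) x := by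
        intro x hx
        have hx2 : x ∈ Icc t1 t2 := ⟨hx.1, le_trans hx.2 ht3le⟩
        have hexp : HasDerivAt (fun s => Real.exp (K * s)) (Real.exp (K * x) * K) x := by
          simpa using (((hasDerivAt_id x).const_mul K).exp)
        exact (hd i x hx2).mul hexp
      refine monotoneOn_of_deriv_nonneg (convex_Icc _ _)
        (fun x hx => ((hderiv x hx).continuousAt).continuousWithinAt) ?_ ?_
      · intro x hx
        rw [interior_Icc] at hx
        exact ((hderiv x ⟨hx.1.le, hx.2.le⟩).differentiableAt).differentiableWithinAt
      · intro x hx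
        rw [interior_Icc] at hx
        have hx' : x ∈ Icc t1 t3 := ⟨hx.1.le, hx.2.le⟩
        rw [(hderiv x hx').deriv]
        have hx2 : x ∈ Icc t1 t2 := ⟨hx'.1, le_trans hx'.2 ht3le⟩
        have hbx := hb x hx2 (hqnn x hx') i
        nlinarith [Real.exp_pos (K * x), mul_le_mul_of_nonneg_right hbx (Real.exp_pos (K * x)).le]
    have ht3S : t3 ∈ S := by
      refine ⟨⟨le_trans hT1 hTt3.le, ht3le⟩, ?_⟩
      intro s hs i
      have hs3 : s ∈ Icc t1 t3 := hs
      have hmle := hmono i ⟨le_refl _, le_trans hT1 hTt3.le⟩ hs3 hs.1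
      have h2 := mul_le_mul_of_nonneg_right hmle (Real.exp_pos (-(K * s))).le
      calc φ i s = q i t1 * Real.exp (K * t1) * Real.exp (-(K * s)) := rfl
        _ ≤ q i s * Real.exp (K * s) * Real.exp (-(K * s)) := h2
        _ = q i s := by rw [mul_assoc, ← Real.exp_add]; simp
    have : t3 ≤ T := le_csSup hbdd ht3S
    linarith
  intro t htmem i
  rw [← hTt2] at htmem
  exact lt_of_lt_of_le (hφpos i t) (hTS.2 t htmem i)


/-- A solution of the ODE system (instB2):
`a0' = f0(t)(a₊a₋ − a0)`, `a₊' = f₊(t)(a0a₋ − a₊)`, `a₋' = f₋(t)(a0a₊ − a₋)`. -/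
def IsSolInstB2 (f0 fp fm a0 ap am : ℝ → ℝ) (s : Set ℝ) : Prop :=
  ∀ t ∈ s,
    HasDerivAt a0 (f0 t * (ap t * am t - a0 t)) t ∧
    HasDerivAt ap (fp t * (a0 t * am t - ap t)) t ∧
    HasDerivAt am (fm t * (a0 t * ap t - am t)) t

/-- The set `S∞ = {a₊a₋ > a0 > 1, a0a₋ > a₊ > 1, a0a₊ > a₋ > 1}`. -/
def SInfty : Set (ℝ × ℝ × ℝ) :=
  {p | p.2.1 * p.2.2 > p.1 ∧ p.1 > 1 ∧ p.1 * p.2.2 > p.2.1 ∧ p.2.1 > 1 ∧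
    p.1 * p.2.1 > p.2.2 ∧ p.2.2 > 1}

/-- The set `S0 = {0 < a₊a₋ < a0 < 1, 0 < a0a₋ < a₊ < 1, 0 < a0a₊ < a₋ < 1}`. -/
def SZero : Set (ℝ × ℝ × ℝ) :=
  {p | 0 < p.2.1 * p.2.2 ∧ p.2.1 * p.2.2 < p.1 ∧ p.1 < 1 ∧
    0 < p.1 * p.2.2 ∧ p.1 * p.2.2 < p.2.1 ∧ p.2.1 < 1 ∧
    0 < p.1 * p.2.1 ∧ p.1 * p.2.1 < p.2.2 ∧ p.2.2 < 1}

/-- The sets `S∞` and `S0` are forward-invariant for the ODE system (instB2), where the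
coefficient functions `f0, f₊, f₋` are continuous and strictly positive on `(0,∞)`. -/
theorem forward_invariant_SInfty_SZero (f0 fp fm a0 ap am : ℝ → ℝ) (t1 t2 : ℝ)
    (ht1 : 0 < t1) (ht12 : t1 ≤ t2)
    (hf0c : ContinuousOn f0 (Ioi 0)) (hfpc : ContinuousOn fp (Ioi 0))
    (hfmc : ContinuousOn fm (Ioi 0))
    (hf0 : ∀ t ∈ Ioi (0 : ℝ), 0 < f0 t) (hfp : ∀ t ∈ Ioi (0 : ℝ), 0 < fp t)
    (hfm : ∀ t ∈ Ioi (0 : ℝ), 0 < fm t)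
    (hsol : IsSolInstB2 f0 fp fm a0 ap am (Icc t1 t2)) :
    ((a0 t1, ap t1, am t1) ∈ SInfty → ∀ t ∈ Icc t1 t2, (a0 t, ap t, am t) ∈ SInfty) ∧
    ((a0 t1, ap t1, am t1) ∈ SZero → ∀ t ∈ Icc t1 t2, (a0 t, ap t, am t) ∈ SZero) := by
  have hsub : Icc t1 t2 ⊆ Ioi 0 := fun t ht => lt_of_lt_of_le ht1 ht.1
  obtain ⟨C0, hC0⟩ := isCompact_Icc.exists_bound_of_continuousOn (hf0c.mono hsub)
  obtain ⟨C1, hC1⟩ := isCompact_Icc.exists_bound_of_continuousOn (hfpc.mono hsub)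
  obtain ⟨C2, hC2⟩ := isCompact_Icc.exists_bound_of_continuousOn (hfmc.mono hsub)
  set K : ℝ := |C0| + |C1| + |C2| with hKdef
  have hK : 0 ≤ K := by positivity
  have hf0K : ∀ t ∈ Icc t1 t2, f0 t ≤ K := by
    intro t ht
    have := hC0 t ht
    rw [Real.norm_eq_abs] at this
    have h1 := le_abs_self (f0 t)
    have h2 := le_abs_self C0
    have h3 := abs_nonneg C1
    have h4 := abs_nonneg C2
    simp only [hKdef]; linarith
  have hfpK : ∀ t ∈ Icc t1 t2, fp t ≤ K := by
    intro t ht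
    have := hC1 t ht
    rw [Real.norm_eq_abs] at this
    have h1 := le_abs_self (fp t)
    have h2 := le_abs_self C1
    have h3 := abs_nonneg C0
    have h4 := abs_nonneg C2
    simp only [hKdef]; linarith
  have hfmK : ∀ t ∈ Icc t1 t2, fm t ≤ K := by
    intro t ht
    have := hC2 t ht
    rw [Real.norm_eq_abs] at this
    have h1 := le_abs_self (fm t)
    have h2 := le_abs_self C2
    have h3 := abs_nonneg C0
    have h4 := abs_nonneg C1
    simp only [hKdef]; linarith
  constructor
  · -- S∞ case
    intro hmem
    obtain ⟨m1, m2, m3, m4, m5, m6⟩ := hmem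
    simp only at m1 m2 m3 m4 m5 m6
    set q : Fin 6 → ℝ → ℝ :=
      ![fun t => a0 t - 1, fun t => ap t - 1, fun t => am t - 1,
        fun t => ap t * am t - a0 t, fun t => a0 t * am t - ap t,
        fun t => a0 t * ap t - am t] with hq
    set d : Fin 6 → ℝ → ℝ :=
      ![fun t => f0 t * (ap t * am t - a0 t),
        fun t => fp t * (a0 t * am t - ap t),
        fun t => fm t * (a0 t * ap t - am t),
        fun t => fp t * (a0 t * am t - ap t) * am t +
          ap t * (fm t * (a0 t * ap t - am t)) - f0 t * (ap t * am t - a0 t),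
        fun t => f0 t * (ap t * am t - a0 t) * am t +
          a0 t * (fm t * (a0 t * ap t - am t)) - fp t * (a0 t * am t - ap t),
        fun t => f0 t * (ap t * am t - a0 t) * ap t +
          a0 t * (fp t * (a0 t * am t - ap t)) - fm t * (a0 t * ap t - am t)] with hdq
    have hd : ∀ i, ∀ t ∈ Icc t1 t2, HasDerivAt (q i) (d i t) t := by
      intro i t ht
      obtain ⟨h0', hp', hm'⟩ := hsol t ht
      fin_cases i
      · exact h0'.sub_const 1
      · exact hp'.sub_const 1
      · exact hm'.sub_const 1
      · exact (hp'.mul hm').sub h0'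
      · exact (h0'.mul hm').sub hp'
      · exact (h0'.mul hp').sub hm'
    have hb : ∀ t ∈ Icc t1 t2, (∀ j, 0 ≤ q j t) → ∀ i, -(K * q i t) ≤ d i t := by
      intro t ht hqn i
      have hq0 : (0:ℝ) ≤ a0 t - 1 := hqn 0
      have hq1 : (0:ℝ) ≤ ap t - 1 := hqn 1
      have hq2 : (0:ℝ) ≤ am t - 1 := hqn 2
      have hq3 : (0:ℝ) ≤ ap t * am t - a0 t := hqn 3
      have hq4 : (0:ℝ) ≤ a0 t * am t - ap t := hqn 4
      have hq5 : (0:ℝ) ≤ a0 t * ap t - am t := hqn 5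
      have hF0 := hf0 t (hsub ht)
      have hFp := hfp t (hsub ht)
      have hFm := hfm t (hsub ht)
      have hK0 := hf0K t ht
      have hKp := hfpK t ht
      have hKm := hfmK t ht
      have hA : (0:ℝ) ≤ a0 t := by linarith
      have hB : (0:ℝ) ≤ ap t := by linarith
      have hC : (0:ℝ) ≤ am t := by linarith
      fin_cases i
      · show -(K * (a0 t - 1)) ≤ f0 t * (ap t * am t - a0 t)
        linarith [mul_nonneg hF0.le hq3, mul_nonneg hK hq0]
      · show -(K * (ap t - 1)) ≤ fp t * (a0 t * am t - ap t)
        linarith [mul_nonneg hFp.le hq4, mul_nonneg hK hq1]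
      · show -(K * (am t - 1)) ≤ fm t * (a0 t * ap t - am t)
        linarith [mul_nonneg hFm.le hq5, mul_nonneg hK hq2]
      · show -(K * (ap t * am t - a0 t)) ≤ fp t * (a0 t * am t - ap t) * am t +
          ap t * (fm t * (a0 t * ap t - am t)) - f0 t * (ap t * am t - a0 t)
        linarith [mul_nonneg (mul_nonneg hFp.le hq4) hC,
          mul_nonneg hB (mul_nonneg hFm.le hq5),
          mul_nonneg (sub_nonneg.2 hK0) hq3]
      · show -(K * (a0 t * am t - ap t)) ≤ f0 t * (ap t * am t - a0 t) * am t +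
          a0 t * (fm t * (a0 t * ap t - am t)) - fp t * (a0 t * am t - ap t)
        linarith [mul_nonneg (mul_nonneg hF0.le hq3) hC,
          mul_nonneg hA (mul_nonneg hFm.le hq5),
          mul_nonneg (sub_nonneg.2 hKp) hq4]
      · show -(K * (a0 t * ap t - am t)) ≤ f0 t * (ap t * am t - a0 t) * ap t +
          a0 t * (fp t * (a0 t * am t - ap t)) - fm t * (a0 t * ap t - am t)
        linarith [mul_nonneg (mul_nonneg hF0.le hq3) hB,
          mul_nonneg hA (mul_nonneg hFp.le hq4),
          mul_nonneg (sub_nonneg.2 hKm) hq5]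
    have h0 : ∀ i, 0 < q i t1 := by
      intro i
      fin_cases i
      · show (0:ℝ) < a0 t1 - 1; linarith
      · show (0:ℝ) < ap t1 - 1; linarith
      · show (0:ℝ) < am t1 - 1; linarith
      · show (0:ℝ) < ap t1 * am t1 - a0 t1; linarith
      · show (0:ℝ) < a0 t1 * am t1 - ap t1; linarith
      · show (0:ℝ) < a0 t1 * ap t1 - am t1; linarith
    have hpos := key_pos_invariant q d t1 t2 K ht12 hK hd hb h0
    intro t ht
    have h0' : (0:ℝ) < a0 t - 1 := hpos t ht 0
    have h1' : (0:ℝ) < ap t - 1 := hpos t ht 1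
    have h2' : (0:ℝ) < am t - 1 := hpos t ht 2
    have h3' : (0:ℝ) < ap t * am t - a0 t := hpos t ht 3
    have h4' : (0:ℝ) < a0 t * am t - ap t := hpos t ht 4
    have h5' : (0:ℝ) < a0 t * ap t - am t := hpos t ht 5
    exact ⟨by simpa using by linarith, by linarith, by simpa using by linarith,
      by linarith, by simpa using by linarith, by linarith⟩
  · -- S0 case
    intro hmem
    obtain ⟨m1, m2, m3, m4, m5, m6, m7, m8, m9⟩ := hmem
    simp only at m1 m2 m3 m4 m5 m6 m7 m8 m9
    set q : Fin 9 → ℝ → ℝ :=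
      ![fun t => 1 - a0 t, fun t => 1 - ap t, fun t => 1 - am t,
        fun t => a0 t - ap t * am t, fun t => ap t - a0 t * am t,
        fun t => am t - a0 t * ap t, a0, ap, am] with hq
    set d : Fin 9 → ℝ → ℝ :=
      ![fun t => -(f0 t * (ap t * am t - a0 t)),
        fun t => -(fp t * (a0 t * am t - ap t)),
        fun t => -(fm t * (a0 t * ap t - am t)),
        fun t => f0 t * (ap t * am t - a0 t) - (fp t * (a0 t * am t - ap t) * am t +
          ap t * (fm t * (a0 t * ap t - am t))),
        fun t => fp t * (a0 t * am t - ap t) - (f0 t * (ap t * am t - a0 t) * am t +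
          a0 t * (fm t * (a0 t * ap t - am t))),
        fun t => fm t * (a0 t * ap t - am t) - (f0 t * (ap t * am t - a0 t) * ap t +
          a0 t * (fp t * (a0 t * am t - ap t))),
        fun t => f0 t * (ap t * am t - a0 t),
        fun t => fp t * (a0 t * am t - ap t),
        fun t => fm t * (a0 t * ap t - am t)] with hdq
    have hd : ∀ i, ∀ t ∈ Icc t1 t2, HasDerivAt (q i) (d i t) t := by
      intro i t ht
      obtain ⟨h0', hp', hm'⟩ := hsol t ht
      fin_cases i
      · exact h0'.const_sub 1
      · exact hp'.const_sub 1
      · exact hm'.const_sub 1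
      · exact h0'.sub (hp'.mul hm')
      · exact hp'.sub (h0'.mul hm')
      · exact hm'.sub (h0'.mul hp')
      · exact h0'
      · exact hp'
      · exact hm'
    have hb : ∀ t ∈ Icc t1 t2, (∀ j, 0 ≤ q j t) → ∀ i, -(K * q i t) ≤ d i t := by
      intro t ht hqn i
      have hq0 : (0:ℝ) ≤ 1 - a0 t := hqn 0
      have hq1 : (0:ℝ) ≤ 1 - ap t := hqn 1
      have hq2 : (0:ℝ) ≤ 1 - am t := hqn 2
      have hq3 : (0:ℝ) ≤ a0 t - ap t * am t := hqn 3
      have hq4 : (0:ℝ) ≤ ap t - a0 t * am t := hqn 4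
      have hq5 : (0:ℝ) ≤ am t - a0 t * ap t := hqn 5
      have hA : (0:ℝ) ≤ a0 t := hqn 6
      have hB : (0:ℝ) ≤ ap t := hqn 7
      have hC : (0:ℝ) ≤ am t := hqn 8
      have hF0 := hf0 t (hsub ht)
      have hFp := hfp t (hsub ht)
      have hFm := hfm t (hsub ht)
      have hK0 := hf0K t ht
      have hKp := hfpK t ht
      have hKm := hfmK t ht
      fin_cases i
      · show -(K * (1 - a0 t)) ≤ -(f0 t * (ap t * am t - a0 t))
        linarith [mul_nonneg hF0.le hq3, mul_nonneg hK hq0]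
      · show -(K * (1 - ap t)) ≤ -(fp t * (a0 t * am t - ap t))
        linarith [mul_nonneg hFp.le hq4, mul_nonneg hK hq1]
      · show -(K * (1 - am t)) ≤ -(fm t * (a0 t * ap t - am t))
        linarith [mul_nonneg hFm.le hq5, mul_nonneg hK hq2]
      · show -(K * (a0 t - ap t * am t)) ≤ f0 t * (ap t * am t - a0 t) -
          (fp t * (a0 t * am t - ap t) * am t + ap t * (fm t * (a0 t * ap t - am t)))
        linarith [mul_nonneg (mul_nonneg hFp.le hq4) hC,
          mul_nonneg hB (mul_nonneg hFm.le hq5),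
          mul_nonneg (sub_nonneg.2 hK0) hq3]
      · show -(K * (ap t - a0 t * am t)) ≤ fp t * (a0 t * am t - ap t) -
          (f0 t * (ap t * am t - a0 t) * am t + a0 t * (fm t * (a0 t * ap t - am t)))
        linarith [mul_nonneg (mul_nonneg hF0.le hq3) hC,
          mul_nonneg hA (mul_nonneg hFm.le hq5),
          mul_nonneg (sub_nonneg.2 hKp) hq4]
      · show -(K * (am t - a0 t * ap t)) ≤ fm t * (a0 t * ap t - am t) -
          (f0 t * (ap t * am t - a0 t) * ap t + a0 t * (fp t * (a0 t * am t - ap t)))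
        linarith [mul_nonneg (mul_nonneg hF0.le hq3) hB,
          mul_nonneg hA (mul_nonneg hFp.le hq4),
          mul_nonneg (sub_nonneg.2 hKm) hq5]
      · show -(K * a0 t) ≤ f0 t * (ap t * am t - a0 t)
        linarith [mul_nonneg hF0.le (mul_nonneg hB hC),
          mul_nonneg (sub_nonneg.2 hK0) hA]
      · show -(K * ap t) ≤ fp t * (a0 t * am t - ap t)
        linarith [mul_nonneg hFp.le (mul_nonneg hA hC),
          mul_nonneg (sub_nonneg.2 hKp) hB]
      · show -(K * am t) ≤ fm t * (a0 t * ap t - am t)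
        linarith [mul_nonneg hFm.le (mul_nonneg hA hB),
          mul_nonneg (sub_nonneg.2 hKm) hC]
    have h0 : ∀ i, 0 < q i t1 := by
      intro i
      fin_cases i
      · show (0:ℝ) < 1 - a0 t1; linarith
      · show (0:ℝ) < 1 - ap t1; linarith
      · show (0:ℝ) < 1 - am t1; linarith
      · show (0:ℝ) < a0 t1 - ap t1 * am t1; linarith
      · show (0:ℝ) < ap t1 - a0 t1 * am t1; linarith
      · show (0:ℝ) < am t1 - a0 t1 * ap t1; linarith
      · show (0:ℝ) < a0 t1; linarith
      · show (0:ℝ) < ap t1; linarith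
      · show (0:ℝ) < am t1; linarith
    have hpos := key_pos_invariant q d t1 t2 K ht12 hK hd hb h0
    intro t ht
    have h0' : (0:ℝ) < 1 - a0 t := hpos t ht 0
    have h1' : (0:ℝ) < 1 - ap t := hpos t ht 1
    have h2' : (0:ℝ) < 1 - am t := hpos t ht 2
    have h3' : (0:ℝ) < a0 t - ap t * am t := hpos t ht 3
    have h4' : (0:ℝ) < ap t - a0 t * am t := hpos t ht 4
    have h5' : (0:ℝ) < am t - a0 t * ap t := hpos t ht 5
    have h6' : (0:ℝ) < a0 t := hpos t ht 6
    have h7' : (0:ℝ) < ap t := hpos t ht 7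
    have h8' : (0:ℝ) < am t := hpos t ht 8
    exact ⟨mul_pos h7' h8', by linarith, by linarith, mul_pos h6' h8', by linarith,
      by linarith, mul_pos h6' h7', by linarith, by linarith⟩
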